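/- arXiv:2304.00465 — 3 statements merged into one kernel-verified Lean document; each statement's English description precedes it below -/
import Mathlib

section
/- Let C be a category equipped with a faithful functor F : C ⥤ FintypeCat such that F maps every morphism of C to an injective function, and such that (pigeonhole property) every morphism f : x ⟶ y of C with card(F x) = card(F y) is an isomorphism. Let I be a function from the objects of C to a type Δ with I x = I y whenever x ≅ y. Suppose n ≥ 2 and (f₀, …, f_{n−1}) is a virtual cycle with respect to the combined invariant x ↦ (I x, card(F x)): morphisms f_i : x_i ⟶ y_i such that I(y_i) = I(x_{i+1 mod n}) and card(F y_i) = card(F x_{i+1 mod n}) for all i. Then every f_i is an isomorphism and the virtual cycle is trivial: I(x_i) = I(y_j) for all i, j. -/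
open CategoryTheory

attribute [local instance] FintypeCat.fintype

/-!
Injectivity makes cardinalities weakly increase along each `f i`, and the cycle conditions carry
them on to the next source; going once around the cycle forces all cardinalities to agree, so
the pigeonhole property makes every `f i` an isomorphism. Then `I` is preserved along each `f i`
as well as across each link of the cycle, hence constant on all sources and targets.
-/

section CyclicChain

variable {α : Type*} {r : α → α → Prop} {n : ℕ} {a : ℕ → α}

theorem rel_mod_add_of_rel_succ_mod [Std.Refl r] [IsTrans α r]
    (h : ∀ i < n, r (a i) (a ((i + 1) % n))) (m : ℕ) {i : ℕ} (hi : i < n) :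
    r (a i) (a ((i + m) % n)) := by
  induction m with
  | zero => rw [Nat.add_zero, Nat.mod_eq_of_lt hi]; exact refl _
  | succ m ih =>
    have hstep := h ((i + m) % n) (Nat.mod_lt _ (by omega))
    rw [Nat.mod_add_mod, Nat.add_assoc] at hstep
    exact _root_.trans ih hstep

theorem rel_of_rel_succ_mod [Std.Refl r] [IsTrans α r]
    (h : ∀ i < n, r (a i) (a ((i + 1) % n))) {i j : ℕ} (hi : i < n) (hj : j < n) :
    r (a i) (a j) := by
  have hij := rel_mod_add_of_rel_succ_mod h (j + n - i) hi
  rwa [Nat.add_sub_cancel' (by omega), Nat.add_mod_right, Nat.mod_eq_of_lt hj] at hij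

theorem eq_of_le_succ_mod [PartialOrder α] (h : ∀ i < n, a i ≤ a ((i + 1) % n))
    {i j : ℕ} (hi : i < n) (hj : j < n) : a i = a j :=
  le_antisymm (rel_of_rel_succ_mod h hi hj) (rel_of_rel_succ_mod h hj hi)

end CyclicChain

theorem stmt_9_general {C : Type*} [Category C] (F : C ⥤ FintypeCat)
    (hinj : ∀ (x y : C) (f : x ⟶ y), Function.Injective (F.map f))
    (hpigeon : ∀ (x y : C) (f : x ⟶ y),
      Fintype.card (F.obj x) = Fintype.card (F.obj y) → IsIso f)
    {Δ : Type*} (I : C → Δ) (hI : ∀ x y : C, (x ≅ y) → I x = I y)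
    (n : ℕ) (x y : ℕ → C)
    (f : ∀ i : ℕ, i < n → (x i ⟶ y i))
    (hcycI : ∀ i : ℕ, i < n → I (y i) = I (x ((i + 1) % n)))
    (hcycCard : ∀ i : ℕ, i < n →
      Fintype.card (F.obj (y i)) = Fintype.card (F.obj (x ((i + 1) % n)))) :
    (∀ (i : ℕ) (hi : i < n), IsIso (f i hi)) ∧
    (∀ i j : ℕ, i < n → j < n → I (x i) = I (y j)) := by
  have hcard_le (i : ℕ) (hi : i < n) :
      Fintype.card (F.obj (x i)) ≤ Fintype.card (F.obj (x ((i + 1) % n))) :=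
    (Fintype.card_le_of_injective _ (hinj _ _ (f i hi))).trans (hcycCard i hi).le
  have hcard_eq (i : ℕ) (hi : i < n) :
      Fintype.card (F.obj (x i)) = Fintype.card (F.obj (y i)) := by
    rw [hcycCard i hi]
    exact eq_of_le_succ_mod (a := fun i => Fintype.card (F.obj (x i))) hcard_le hi
      (Nat.mod_lt _ (by omega))
  have hiso (i : ℕ) (hi : i < n) : IsIso (f i hi) := hpigeon _ _ _ (hcard_eq i hi)
  have hI_step (i : ℕ) (hi : i < n) : I (x i) = I (x ((i + 1) % n)) :=
    (hI _ _ (asIso (f i hi))).trans (hcycI i hi)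
  refine ⟨hiso, fun i j hi hj => ?_⟩
  rw [hcycI j hj]
  exact rel_of_rel_succ_mod (r := Eq) (a := fun i => I (x i)) hI_step hi
    (Nat.mod_lt _ (by omega))

/-- In a pigeonhole category (concrete over finite sets, with
injective realizations, where morphisms between objects of equal cardinality
are isomorphisms), every virtual cycle with respect to the combined invariant
`x ↦ (I x, card (F x))` consists of isomorphisms and is trivial. -/
theorem stmt_9 {C : Type*} [Category C] (F : C ⥤ FintypeCat) (hF : F.Faithful)
    (hinj : ∀ (x y : C) (f : x ⟶ y), Function.Injective (F.map f))
    (hpigeon : ∀ (x y : C) (f : x ⟶ y),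
      Fintype.card (F.obj x) = Fintype.card (F.obj y) → IsIso f)
    {Δ : Type*} (I : C → Δ) (hI : ∀ x y : C, (x ≅ y) → I x = I y)
    (n : ℕ) (hn : 2 ≤ n) (x y : ℕ → C)
    (f : ∀ i : ℕ, i < n → (x i ⟶ y i))
    (hcycI : ∀ i : ℕ, i < n → I (y i) = I (x ((i + 1) % n)))
    (hcycCard : ∀ i : ℕ, i < n →
      Fintype.card (F.obj (y i)) = Fintype.card (F.obj (x ((i + 1) % n)))) :
    (∀ (i : ℕ) (hi : i < n), IsIso (f i hi)) ∧
    (∀ i j : ℕ, i < n → j < n → I (x i) = I (y j)) :=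
  stmt_9_general F hinj hpigeon I hI n x y f hcycI hcycCard
end

section
/- Consider the simple graph on the positive natural numbers in which m is adjacent to n iff m ≠ n and either (m ∣ n and n/m is prime) or (n ∣ m and m/n is prime); this is the cover graph of the divisibility partial order. For all positive naturals m, n, the extended graph distance between m and n in this graph equals ∑_p |ν_p(m) − ν_p(n)|, the sum over all primes p of the absolute differences of the p-adic valuations (Nat.factorization) of m and n. In particular this distance is always finite. -/
/-!
Send `m` to its vector of valuations `p ↦ ν_p m`. An edge of the cover graph changes this vector
by one unit in one coordinate, so the ℓ¹ distance of valuation vectors drops by at most one along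
each edge, and every walk from `m` to `n` is at least that long. Conversely, while `m ≠ n`,
multiplying or dividing `m` by a prime `p` at which the valuations differ moves one unit closer
to `n`, which yields a walk of exactly that length.
-/

namespace SimpleGraph

variable {V : Type*} {G : SimpleGraph V} {f : V → V → ℕ}

theorem Walk.le_length_of_adj_le_succ (hself : ∀ v, f v v = 0)
    (hadj : ∀ u v w, G.Adj u v → f u w ≤ f v w + 1) {u v : V} (p : G.Walk u v) :
    f u v ≤ p.length := by
  induction p with
  | nil => simp [hself]
  | cons h p ih =>
    rw [Walk.length_cons]
    exact (hadj _ _ _ h).trans (Nat.add_le_add_right ih 1)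

theorem edist_le_of_exists_adj_lt (hdesc : ∀ u v, u ≠ v → ∃ w, G.Adj u w ∧ f w v < f u v)
    (u v : V) : G.edist u v ≤ f u v := by
  induction hk : f u v using Nat.strong_induction_on generalizing u with
  | _ k ih =>
    obtain rfl | huv := eq_or_ne u v
    · simp
    obtain ⟨w, huw, hlt⟩ := hdesc u v huv
    calc G.edist u v ≤ G.edist u w + G.edist w v := G.edist_triangle
      _ ≤ 1 + f w v := add_le_add (edist_eq_one_iff_adj.mpr huw).le (ih _ (hk ▸ hlt) w rfl)
      _ ≤ k := by norm_cast; omega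

theorem edist_eq_of_adj_le_succ_of_exists_adj_lt (hself : ∀ v, f v v = 0)
    (hadj : ∀ u v w, G.Adj u v → f u w ≤ f v w + 1)
    (hdesc : ∀ u v, u ≠ v → ∃ w, G.Adj u w ∧ f w v < f u v) (u v : V) :
    G.edist u v = f u v :=
  le_antisymm (edist_le_of_exists_adj_lt hdesc u v)
    (le_iInf fun p => Nat.cast_le.mpr (p.le_length_of_adj_le_succ hself hadj))

end SimpleGraph

namespace Finsupp

variable {ι : Type*} [DecidableEq ι]

def natDist (x y : ι →₀ ℕ) : ℕ :=
  ∑ i ∈ x.support ∪ y.support, Nat.dist (x i) (y i)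

theorem natDist_eq_sum_of_subset {x y : ι →₀ ℕ} {s : Finset ι}
    (h : x.support ∪ y.support ⊆ s) : natDist x y = ∑ i ∈ s, Nat.dist (x i) (y i) :=
  Finset.sum_subset h fun i _ hi => by
    simp only [Finset.mem_union, mem_support_iff, not_or, not_not] at hi
    simp [hi.1, hi.2, Nat.dist_self]

@[simp]
theorem natDist_self (x : ι →₀ ℕ) : natDist x x = 0 :=
  Finset.sum_eq_zero fun _ _ => Nat.dist_self _

theorem natDist_add_single_one (x y : ι →₀ ℕ) (i : ι) :
    natDist (x + single i 1) y + Nat.dist (x i) (y i) =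
      natDist x y + Nat.dist (x i + 1) (y i) := by
  set s := insert i (x.support ∪ y.support)
  have hsupp : (x + single i 1).support ⊆ s := fun j hj => by
    by_cases hji : j = i
    · exact hji ▸ Finset.mem_insert_self _ _
    · refine Finset.mem_insert_of_mem (Finset.mem_union_left _ ?_)
      simpa [single_apply, Ne.symm hji] using hj
  rw [natDist_eq_sum_of_subset (Finset.union_subset hsupp (by grind)),
    natDist_eq_sum_of_subset (Finset.subset_insert _ _),
    ← Finset.add_sum_erase s _ (Finset.mem_insert_self _ _),
    ← Finset.add_sum_erase s _ (Finset.mem_insert_self _ _)]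
  have hrest : ∀ j ∈ s.erase i, (x + single i 1 : ι →₀ ℕ) j = x j := fun j hj => by
    simp [Ne.symm (Finset.ne_of_mem_erase hj)]
  rw [Finset.sum_congr rfl fun j hj => by rw [hrest j hj]]
  simp only [coe_add, Pi.add_apply, single_eq_same]
  ring

theorem natDist_add_single_one_le (x y : ι →₀ ℕ) (i : ι) :
    natDist (x + single i 1) y ≤ natDist x y + 1 := by
  have := natDist_add_single_one x y i
  unfold Nat.dist at this
  omega

theorem natDist_le_add_single_one (x y : ι →₀ ℕ) (i : ι) :
    natDist x y ≤ natDist (x + single i 1) y + 1 := by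
  have := natDist_add_single_one x y i
  unfold Nat.dist at this
  omega

theorem natDist_add_single_one_lt {x y : ι →₀ ℕ} {i : ι} (h : x i < y i) :
    natDist (x + single i 1) y < natDist x y := by
  have := natDist_add_single_one x y i
  unfold Nat.dist at this
  omega

theorem natDist_lt_add_single_one {x y : ι →₀ ℕ} {i : ι} (h : y i ≤ x i) :
    natDist x y < natDist (x + single i 1) y := by
  have := natDist_add_single_one x y i
  unfold Nat.dist at this
  omega

end Finsupp

namespace Nat

theorem factorization_mul_prime {m p : ℕ} (hm : m ≠ 0) (hp : p.Prime) :
    (m * p).factorization = m.factorization + Finsupp.single p 1 := by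
  rw [factorization_mul hm hp.ne_zero, hp.factorization]

theorem dvd_and_prime_div_iff {m n : ℕ} (hm : 0 < m) :
    m ∣ n ∧ (n / m).Prime ↔ ∃ p, p.Prime ∧ n = m * p := by
  constructor
  · rintro ⟨⟨p, rfl⟩, hp⟩
    exact ⟨p, by rwa [Nat.mul_div_cancel_left p hm] at hp, rfl⟩
  · rintro ⟨p, hp, rfl⟩
    exact ⟨dvd_mul_right m p, by rwa [Nat.mul_div_cancel_left p hm]⟩

theorem finsum_prime_natAbs_sub_factorization (m n : ℕ) :
    ∑ᶠ (p : ℕ) (_ : p.Prime), ((m.factorization p : ℤ) - n.factorization p).natAbs =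
      m.factorization.natDist n.factorization := by
  rw [Finsupp.natDist]
  refine (finsum_cond_eq_sum_of_cond_iff _ fun {p} hp => ?_).trans
    (Finset.sum_congr rfl fun p _ => by unfold Nat.dist; omega)
  have hne : m.factorization p ≠ n.factorization p := by omega
  rw [Finset.mem_union]
  constructor
  · intro _
    simp only [Finsupp.mem_support_iff]
    omega
  · rintro (h | h) <;> rw [support_factorization] at h <;> exact prime_of_mem_primeFactors h

end Nat

open SimpleGraph Finsupp

def divisibilityCoverGraph : SimpleGraph ℕ+ :=
  SimpleGraph.fromRel fun m n => (m : ℕ) ∣ n ∧ ((n : ℕ) / m).Prime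

theorem divisibilityCoverGraph_adj {m n : ℕ+} :
    divisibilityCoverGraph.Adj m n ↔ ∃ p, p.Prime ∧ ((n : ℕ) = m * p ∨ (m : ℕ) = n * p) := by
  rw [divisibilityCoverGraph, fromRel_adj, Nat.dvd_and_prime_div_iff m.pos,
    Nat.dvd_and_prime_div_iff n.pos]
  constructor
  · rintro ⟨-, ⟨p, hp, h⟩ | ⟨p, hp, h⟩⟩
    exacts [⟨p, hp, Or.inl h⟩, ⟨p, hp, Or.inr h⟩]
  · have hne {a b : ℕ+} {p : ℕ} (hp : p.Prime) (h : (b : ℕ) = a * p) : a ≠ b := by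
      rintro rfl
      exact ((Nat.lt_mul_iff_one_lt_right a.pos).mpr hp.one_lt).ne h
    rintro ⟨p, hp, h | h⟩
    exacts [⟨hne hp h, Or.inl ⟨p, hp, h⟩⟩, ⟨(hne hp h).symm, Or.inr ⟨p, hp, h⟩⟩]

theorem exists_divisibilityCoverGraph_adj_natDist_lt {u v : ℕ+} (huv : u ≠ v) :
    ∃ w, divisibilityCoverGraph.Adj u w ∧
      (w : ℕ).factorization.natDist (v : ℕ).factorization <
        (u : ℕ).factorization.natDist (v : ℕ).factorization := by
  obtain ⟨p, hp⟩ : ∃ p, (u : ℕ).factorization p ≠ (v : ℕ).factorization p := by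
    by_contra! h
    exact huv (PNat.coe_injective (Nat.factorization_inj u.ne_zero v.ne_zero (Finsupp.ext h)))
  have hprime : p.Prime := by
    by_contra hnp
    simp [Nat.factorization_eq_zero_of_not_prime _ hnp] at hp
  rcases hp.lt_or_gt with hlt | hgt
  · refine ⟨(u * ⟨p, hprime.pos⟩ : ℕ+), divisibilityCoverGraph_adj.mpr ⟨p, hprime, Or.inl rfl⟩, ?_⟩
    change ((u : ℕ) * p).factorization.natDist _ < _
    rw [Nat.factorization_mul_prime u.ne_zero hprime]
    exact natDist_add_single_one_lt hlt
  · obtain ⟨k, hk⟩ := Nat.dvd_of_factorization_pos (n := u) (p := p) (by omega)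
    have hk0 : k ≠ 0 := by rintro rfl; simp at hk
    have hu : (u : ℕ) = k * p := by rw [hk, mul_comm]
    refine ⟨⟨k, Nat.pos_of_ne_zero hk0⟩, divisibilityCoverGraph_adj.mpr ⟨p, hprime, Or.inr hu⟩, ?_⟩
    rw [hu, Nat.factorization_mul_prime hk0 hprime] at hgt ⊢
    refine natDist_lt_add_single_one ?_
    simp only [coe_add, Pi.add_apply, single_eq_same] at hgt
    exact Nat.lt_succ_iff.mp hgt

theorem divisibilityCoverGraph_edist (m n : ℕ+) :
    divisibilityCoverGraph.edist m n = (m : ℕ).factorization.natDist (n : ℕ).factorization := by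
  refine edist_eq_of_adj_le_succ_of_exists_adj_lt
    (f := fun m n : ℕ+ => (m : ℕ).factorization.natDist (n : ℕ).factorization)
    (fun _ => natDist_self _) ?_
    (fun _ _ => exists_divisibilityCoverGraph_adj_natDist_lt) m n
  intro u v w h
  obtain ⟨p, hp, hv | hu⟩ := divisibilityCoverGraph_adj.mp h
  · rw [hv, Nat.factorization_mul_prime u.ne_zero hp]
    exact natDist_le_add_single_one _ _ _
  · rw [hu, Nat.factorization_mul_prime v.ne_zero hp]
    exact natDist_add_single_one_le _ _ _

/-- In the cover graph of the divisibility order on positive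
naturals (m adjacent to n iff m ≠ n and one divides the other with prime
quotient), the extended graph distance between m and n equals
`∑_p |ν_p(m) − ν_p(n)|`, the sum over primes of absolute differences of
p-adic valuations; in particular it is always finite. -/
theorem stmt_10 (G : SimpleGraph ℕ+)
    (hG : ∀ m n : ℕ+, G.Adj m n ↔ m ≠ n ∧
      (((m : ℕ) ∣ (n : ℕ) ∧ Nat.Prime ((n : ℕ) / (m : ℕ))) ∨
       ((n : ℕ) ∣ (m : ℕ) ∧ Nat.Prime ((m : ℕ) / (n : ℕ))))) :
    ∀ m n : ℕ+,
      G.edist m n =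
        ((∑ᶠ (p : ℕ) (_ : Nat.Prime p),
          (((m : ℕ).factorization p : ℤ) - ((n : ℕ).factorization p : ℤ)).natAbs : ℕ) : ℕ∞) ∧
      G.edist m n ≠ ⊤ := by
  obtain rfl : G = divisibilityCoverGraph := by
    ext m n
    exact hG m n
  intro m n
  rw [divisibilityCoverGraph_edist, Nat.finsum_prime_natAbs_sub_factorization]
  exact ⟨rfl, ENat.natCast_ne_top _⟩
end

section
/- Let G be a simple graph on a finite vertex type V, and let G' be the simple graph on V ⊕ Unit whose adjacency is that of G on the Sum.inl copy of V, with the additional vertex Sum.inr () isolated (adjacent to nothing). Let H be a simple graph on a finite vertex type W such that there exist graph embeddings G ↪ H and H ↪ G'. Then H is isomorphic to G or H is isomorphic to G' (there is a graph isomorphism H ≃g G or H ≃g G'). -/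
/-! An embedding of finite graphs forces `|V| ≤ |W| ≤ |V| + 1` on the vertex counts, and an
embedding between graphs with equally many vertices is bijective, hence an isomorphism. -/

namespace SimpleGraph.Embedding

variable {V W : Type*} [Fintype V] [Fintype W] {G : SimpleGraph V} {H : SimpleGraph W}

theorem card_le (f : G ↪g H) : Fintype.card V ≤ Fintype.card W :=
  Fintype.card_le_of_injective f f.injective

theorem nonempty_iso_of_card_le (f : G ↪g H) (h : Fintype.card W ≤ Fintype.card V) :
    Nonempty (G ≃g H) :=
  ⟨RelIso.ofSurjective f ((Fintype.bijective_iff_injective_and_card f).2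
    ⟨f.injective, f.card_le.antisymm h⟩).2⟩

end SimpleGraph.Embedding

theorem stmt_18_general {V : Type*} [Fintype V] (G : SimpleGraph V)
    (G' : SimpleGraph (V ⊕ Unit))
    {W : Type*} [Fintype W] (H : SimpleGraph W)
    (h₁ : Nonempty (G ↪g H)) (h₂ : Nonempty (H ↪g G')) :
    Nonempty (H ≃g G) ∨ Nonempty (H ≃g G') := by
  obtain ⟨f⟩ := h₁
  obtain ⟨g⟩ := h₂
  have hg : Fintype.card W ≤ Fintype.card V + 1 := by
    simpa using g.card_le
  rcases f.card_le.eq_or_lt with hVW | hVW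
  · exact Or.inl ((f.nonempty_iso_of_card_le hVW.ge).map SimpleGraph.Iso.symm)
  · refine Or.inr (g.nonempty_iso_of_card_le ?_)
    simp only [Fintype.card_sum, Fintype.card_unit]
    omega

/-- If G' is obtained from G by adjoining an isolated vertex, and
H embeds G and embeds into G', then H is isomorphic to G or to G'. -/
theorem stmt_18 {V : Type*} [Fintype V] (G : SimpleGraph V)
    (G' : SimpleGraph (V ⊕ Unit))
    (hG' : ∀ a b : V ⊕ Unit, G'.Adj a b ↔
      ∃ u v : V, a = Sum.inl u ∧ b = Sum.inl v ∧ G.Adj u v)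
    {W : Type*} [Fintype W] (H : SimpleGraph W)
    (h₁ : Nonempty (G ↪g H)) (h₂ : Nonempty (H ↪g G')) :
    Nonempty (H ≃g G) ∨ Nonempty (H ≃g G') :=
  stmt_18_general G G' H h₁ h₂
end
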